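/- arXiv:2604.14638 — 9 statements merged into one kernel-verified Lean document; each statement's English description precedes it below -/
import Mathlib

section
/- Fix an integer n ≥ 2 and set ρ = −n/2. Regard n, 𝔴, m_Φ and the lower-order coefficients f_{1,j}, f_{2,j}, f_{3,j} with 1 ≤ j ≤ n−1 as fixed. Then there exist polynomials P₀, P₁, P₂ ∈ ℂ[k] with deg P₁ ≤ 2 and deg P₂ ≤ 2, and a constant c ∈ ℂ, all depending only on n, 𝔴, m_Φ and the coefficients f_{a,j} with j ≤ n−1 (a = 1,2,3), such that for every choice of f_{1,n}, f_{2,n}, f_{3,n}, f_{1,n+1}, f_{2,n+1}, f_{3,n+1} ∈ ℂ one has det 𝓜⁽ⁿ⁾(−n/2) = f_{1,n}·P₁ + f_{2,n}·P₂ + c·f_{3,n}·k + P₀. In particular, det 𝓜⁽ⁿ⁾(−n/2) is an affine function of (f_{1,n}, f_{2,n}, f_{3,n}), is independent of f_{1,n+1}, f_{2,n+1}, f_{3,n+1}, the coefficient f_{3,n} occurs only in the coefficient of k¹ of the determinant, and f_{1,n}, f_{2,n} occur only in the coefficients of k⁰, k¹, k² of the determinant. -/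
open Polynomial

/-- `A_m = Σ_{i=1}^{m-1} f_{1,i} f_{2,m-i}` (vanishing for `m < 2`). -/
noncomputable def Acoef (f1 f2 : ℕ → ℂ) (m : ℤ) : ℂ :=
  ∑ i ∈ Finset.Ico 1 m.toNat, f1 i * f2 (m.toNat - i)

/-- `B_m = ((m+1)/2)·A_{m+1} - Σ_{j=2}^m (-1)^{m-j} A_j` for `m ≥ 1`, and `0` otherwise. -/
noncomputable def Bcoef (f1 f2 : ℕ → ℂ) (m : ℤ) : ℂ :=
  if 1 ≤ m then
    ((m : ℂ) + 1) / 2 * Acoef f1 f2 (m + 1)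
      - ∑ j ∈ Finset.Icc 2 m.toNat, (-1 : ℂ) ^ (m.toNat - j) * Acoef f1 f2 (j : ℤ)
  else 0

/-- `C_0 = 𝔴²`; for `m ≥ 1`,
`C_m = -2𝔴 f_{3,m}·k + (Σ_{i=1}^{m-1} f_{3,i} f_{3,m-i} - f_{1,m})·k²
      - m_Φ²·Σ_{j=1}^m (-1)^{m-j}(m-j+1) f_{1,j}`; and `C_m = 0` for `m < 0`. -/
noncomputable def Ccoef (f1 f3 : ℕ → ℂ) (w mPhi : ℂ) (m : ℤ) : Polynomial ℂ :=
  if m = 0 then Polynomial.C (w ^ 2)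
  else if 1 ≤ m then
    Polynomial.C (-2 * w * f3 m.toNat) * Polynomial.X
      + Polynomial.C ((∑ i ∈ Finset.Ico 1 m.toNat, f3 i * f3 (m.toNat - i)) - f1 m.toNat)
          * Polynomial.X ^ 2
      - Polynomial.C (mPhi ^ 2 *
          ∑ j ∈ Finset.Icc 1 m.toNat, (-1 : ℂ) ^ (m.toNat - j) * ((m.toNat - j + 1 : ℕ) : ℂ) * f1 j)
  else 0

/-- The (1-based) `(K,S)` entry
`M_{KS} = A_{K-S+3}·(ρ+S-1)(ρ+S-2) + B_{K-S+2}·(ρ+S-1) + C_{K-S+1}`. -/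
noncomputable def Ment (f1 f2 f3 : ℕ → ℂ) (w mPhi ρ : ℂ) (K S : ℕ) : Polynomial ℂ :=
  Polynomial.C (Acoef f1 f2 ((K : ℤ) - (S : ℤ) + 3) * ((ρ + (S : ℂ) - 1) * (ρ + (S : ℂ) - 2)))
    + Polynomial.C (Bcoef f1 f2 ((K : ℤ) - (S : ℤ) + 2) * (ρ + (S : ℂ) - 1))
    + Ccoef f1 f3 w mPhi ((K : ℤ) - (S : ℤ) + 1)

/-- The near-horizon Frobenius matrix `𝓜⁽ⁿ⁾(ρ)` (entries indexed 1-based in the paper). -/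
noncomputable def Mmat (f1 f2 f3 : ℕ → ℂ) (w mPhi : ℂ) (n : ℕ) (ρ : ℂ) :
    Matrix (Fin n) (Fin n) (Polynomial ℂ) :=
  fun K S => Ment f1 f2 f3 w mPhi ρ (K.1 + 1) (S.1 + 1)

/-!
At `ρ = -n/2` the matrix `𝓜⁽ⁿ⁾` is lower Hessenberg with constant superdiagonal, and an entry
`M_{KS}` only involves the coefficients `f_{a,j}` with `j ≤ K - S + 2`. Hence the top coefficients
enter only the entries `(n-1,1)`, `(n,1)` and `(n,2)`. In the corner `(n,1)` the coefficients
`f_{a,n+1}` occur only through `A_{n+2}`, whose two occurrences cancel at `ρ = -n/2`; what is left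
of the perturbation is affine in `f_{a,n}`, with `f_{3,n}` only in front of `k`.

Expanding the determinant along rows `n-1` and `n` writes it as an affine combination of the
determinants of `𝓜` with one of these rows replaced by a unit vector `e₁` or `e₂`. Deleting that
row and the corresponding column leaves a triangular matrix, so these cofactors are products of
superdiagonal (constant) entries with at most one entry of degree `≤ 2`. The only bilinear term
is the product of the perturbations of `(n-1,1)` and `(n,2)`: it vanishes because for `n = 2`
the second one carries the factor `(2-n)/4`, and for `n ≥ 3` the first row of `𝓜` lies in the
span of `e₁, e₂`.
-/

open Set

namespace Matrix

variable {R : Type*}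

def IsLowerHessenberg [Zero R] {k : ℕ} (A : Matrix (Fin k) (Fin k) R) : Prop :=
  ∀ r s : Fin k, (r : ℕ) + 1 < s → A r s = 0

theorem eq_updateRow_updateRow {ι κ : Type*} [DecidableEq ι] {M N : Matrix ι κ R} {i j : ι}
    (h : ∀ k, k ≠ i → k ≠ j → M k = N k) :
    M = (N.updateRow i (M i)).updateRow j (M j) := by
  ext k : 1
  by_cases hj : k = j
  · simp [hj]
  by_cases hi : k = i
  · simp [hi, updateRow_ne (hi ▸ hj)]
  · simp [updateRow_ne hi, updateRow_ne hj, h k hi hj]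

section CommRing

variable [CommRing R]

theorem det_updateRow_add_of_apply_eq {ι : Type*} [DecidableEq ι] [Fintype ι]
    {M : Matrix ι ι R} {j : ι} {u : ι → R} (h : M j = u) (w : ι → R) :
    (M.updateRow j (u + w)).det = M.det + (M.updateRow j w).det := by
  rw [det_updateRow_add, ← h, updateRow_eq_self]

theorem det_updateRow_add_smul_single_updateRow_add_smul_single {ι : Type*} [DecidableEq ι]
    [Fintype ι] (N : Matrix ι ι R) {i j : ι} (hij : i ≠ j) (k l : ι) (a p b : R) :
    ((N.updateRow i (N i + a • Pi.single k 1)).updateRow j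
        (N j + (p • Pi.single k 1 + b • Pi.single l 1))).det
      = N.det + a * (N.updateRow i (Pi.single k 1)).det
        + p * (N.updateRow j (Pi.single k 1)).det + b * (N.updateRow j (Pi.single l 1)).det
        + a * b * ((N.updateRow i (Pi.single k 1)).updateRow j (Pi.single l 1)).det := by
  have hsame : ((N.updateRow i (Pi.single k 1)).updateRow j (Pi.single k 1)).det = 0 :=
    det_zero_of_row_eq hij (by simp [updateRow_ne hij])
  rw [updateRow_comm _ hij, det_updateRow_add_of_apply_eq (updateRow_ne hij),
    det_updateRow_smul, det_updateRow_add_of_apply_eq rfl, det_updateRow_add, det_updateRow_smul,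
    det_updateRow_smul, updateRow_comm _ hij.symm,
    det_updateRow_add_of_apply_eq (updateRow_ne hij.symm), det_updateRow_add,
    det_updateRow_smul, det_updateRow_smul, hsame]
  ring

namespace IsLowerHessenberg

theorem updateRow_single_zero {k : ℕ} {A : Matrix (Fin (k + 1)) (Fin (k + 1)) R}
    (hA : A.IsLowerHessenberg) (i : Fin (k + 1)) :
    (A.updateRow i (Pi.single 0 1)).IsLowerHessenberg := by
  intro r s hrs
  rw [updateRow_apply]
  split_ifs
  · exact Pi.single_eq_of_ne (by rintro rfl; simp at hrs) _
  · exact hA r s hrs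

theorem det_submatrix {k l : ℕ} {A : Matrix (Fin k) (Fin k) R} (hA : A.IsLowerHessenberg)
    (f g : Fin l → Fin k) (hfg : ∀ r s, r < s → (f r : ℕ) + 1 < g s) :
    (A.submatrix f g).det = ∏ r, A (f r) (g r) :=
  det_of_isLowerTriangular _ fun _ _ hrs => hA _ _ (hfg _ _ hrs)

variable {m : ℕ} {A : Matrix (Fin (m + 2)) (Fin (m + 2)) R}

theorem det_updateRow_last_single_zero (hA : A.IsLowerHessenberg) :
    (A.updateRow (Fin.last (m + 1)) (Pi.single 0 1)).det
      = (-1) ^ (m + 1) * ∏ r : Fin (m + 1), A r.castSucc r.succ := by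
  rw [← adjugate_apply, adjugate_fin_succ_eq_det_submatrix, Fin.succAbove_last,
    hA.det_submatrix _ _ fun r s hrs => by simpa using hrs]
  simp

theorem det_updateRow_castSucc_last_single_zero (hA : A.IsLowerHessenberg) :
    (A.updateRow (Fin.last m).castSucc (Pi.single 0 1)).det
      = (-1) ^ m * ((∏ r : Fin m, A r.castSucc.castSucc r.castSucc.succ)
          * A (Fin.last (m + 1)) (Fin.last (m + 1))) := by
  rw [← adjugate_apply, adjugate_fin_succ_eq_det_submatrix,
    hA.det_submatrix _ _ fun r s hrs => ?_, Fin.prod_univ_castSucc]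
  · simp [Fin.succAbove_of_castSucc_lt]
  · have hr : r.castSucc < (Fin.last m).castSucc :=
      Fin.castSucc_lt_castSucc_iff.2 (lt_of_lt_of_le hrs (Fin.le_last s))
    simpa [Fin.succAbove_of_castSucc_lt _ _ hr] using hrs

theorem det_updateRow_last_single_one (hA : A.IsLowerHessenberg) :
    (A.updateRow (Fin.last (m + 1)) (Pi.single 1 1)).det
      = (-1) ^ (m + 1 + 1) * (A 0 0 * ∏ r : Fin m, A r.succ.castSucc r.succ.succ) := by
  rw [← adjugate_apply, adjugate_fin_succ_eq_det_submatrix, Fin.succAbove_last,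
    hA.det_submatrix _ _ fun r s hrs => ?_, Fin.prod_univ_succ]
  · simp
  · obtain ⟨s, rfl⟩ := Fin.exists_succ_eq.2 (Fin.ne_zero_of_lt hrs)
    simpa [Fin.lt_def] using hrs

theorem eq_zero_or_det_updateRow_updateRow_single_eq_zero (hA : A.IsLowerHessenberg) :
    m = 0 ∨ ((A.updateRow (Fin.last m).castSucc (Pi.single 0 1)).updateRow (Fin.last (m + 1))
      (Pi.single 1 1)).det = 0 := by
  obtain _ | m := m
  · exact Or.inl rfl
  refine Or.inr ?_
  rw [(hA.updateRow_single_zero _).det_updateRow_last_single_one]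
  refine mul_eq_zero_of_right _ (mul_eq_zero_of_right _ ?_)
  exact Finset.prod_eq_zero (Finset.mem_univ (Fin.last m)) (by simp)

end IsLowerHessenberg

end CommRing

end Matrix

namespace Polynomial

variable {R : Type*} [CommRing R]

theorem natDegree_neg_one_pow_mul (k : ℕ) (p : R[X]) :
    ((-1) ^ k * p).natDegree = p.natDegree := by
  rcases neg_one_pow_eq_or R[X] k with h | h <;> simp [h]

theorem natDegree_prod_eq_zero {ι : Type*} (s : Finset ι) (f : ι → R[X])
    (h : ∀ i ∈ s, (f i).natDegree = 0) : (∏ i ∈ s, f i).natDegree = 0 :=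
  Nat.eq_zero_of_le_zero <| (natDegree_prod_le s f).trans (Finset.sum_eq_zero h).le

end Polynomial

namespace Matrix.IsLowerHessenberg

variable {R : Type*} [CommRing R] {m : ℕ} {A : Matrix (Fin (m + 2)) (Fin (m + 2)) R[X]}

theorem natDegree_det_updateRow_last_single_zero (hA : A.IsLowerHessenberg)
    (hsup : ∀ r : Fin (m + 1), (A r.castSucc r.succ).natDegree = 0) :
    (A.updateRow (Fin.last (m + 1)) (Pi.single 0 1)).det.natDegree = 0 := by
  rw [hA.det_updateRow_last_single_zero, natDegree_neg_one_pow_mul]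
  exact natDegree_prod_eq_zero _ _ fun r _ => hsup r

theorem natDegree_det_updateRow_castSucc_last_single_zero_le (hA : A.IsLowerHessenberg)
    (hsup : ∀ r : Fin (m + 1), (A r.castSucc r.succ).natDegree = 0) :
    (A.updateRow (Fin.last m).castSucc (Pi.single 0 1)).det.natDegree
      ≤ (A (Fin.last (m + 1)) (Fin.last (m + 1))).natDegree := by
  rw [hA.det_updateRow_castSucc_last_single_zero, natDegree_neg_one_pow_mul]
  refine natDegree_mul_le.trans (le_of_eq ?_)
  rw [natDegree_prod_eq_zero _ _ fun r _ => hsup r.castSucc, zero_add]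

theorem natDegree_det_updateRow_last_single_one_le (hA : A.IsLowerHessenberg)
    (hsup : ∀ r : Fin (m + 1), (A r.castSucc r.succ).natDegree = 0) :
    (A.updateRow (Fin.last (m + 1)) (Pi.single 1 1)).det.natDegree ≤ (A 0 0).natDegree := by
  rw [hA.det_updateRow_last_single_one, natDegree_neg_one_pow_mul]
  refine natDegree_mul_le.trans (le_of_eq ?_)
  rw [natDegree_prod_eq_zero _ _ fun r _ => hsup r.succ, add_zero]

end Matrix.IsLowerHessenberg

section Hessenberg

variable (f1 f2 f3 : ℕ → ℂ) (w mPhi ρ : ℂ)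

theorem Acoef_eq_zero_of_le_one {m : ℤ} (hm : m ≤ 1) : Acoef f1 f2 m = 0 := by
  rw [Acoef, Finset.Ico_eq_empty (by omega), Finset.sum_empty]

theorem Ment_eq_zero_of_add_two_le {K S : ℕ} (h : K + 2 ≤ S) :
    Ment f1 f2 f3 w mPhi ρ K S = 0 := by
  rw [Ment, Acoef_eq_zero_of_le_one _ _ (by omega), Bcoef, if_neg (by omega), Ccoef,
    if_neg (by omega), if_neg (by omega)]
  simp

theorem natDegree_Ment_self_add_one (K : ℕ) :
    (Ment f1 f2 f3 w mPhi ρ K (K + 1)).natDegree = 0 := by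
  rw [Ment, Ccoef, if_pos (by push_cast; ring)]
  simp only [← map_add, natDegree_C]

theorem natDegree_Ment_le (K S : ℕ) : (Ment f1 f2 f3 w mPhi ρ K S).natDegree ≤ 2 := by
  unfold Ment Ccoef
  split_ifs <;> compute_degree!

theorem isLowerHessenberg_Mmat (n : ℕ) : (Mmat f1 f2 f3 w mPhi n ρ).IsLowerHessenberg :=
  fun _ _ h => Ment_eq_zero_of_add_two_le _ _ _ _ _ _ (by omega)

end Hessenberg

section TopCoefficients

variable {n : ℕ} {f1 f2 f3 h1 h2 h3 : ℕ → ℂ}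

theorem Acoef_congr (hf1 : EqOn f1 h1 (Ico 1 n)) (hf2 : EqOn f2 h2 (Ico 1 n)) {m : ℤ}
    (hm : m ≤ n) : Acoef f1 f2 m = Acoef h1 h2 m :=
  Finset.sum_congr rfl fun i hi => by
    rw [Finset.mem_Ico] at hi
    rw [hf1 ⟨hi.1, by omega⟩, hf2 ⟨by omega, by omega⟩]

theorem Acoef_natCast_add_one_eq_add (hn : 2 ≤ n) (hf1 : EqOn f1 h1 (Ico 1 n))
    (hf2 : EqOn f2 h2 (Ico 1 n)) (hh1 : h1 n = 0) (hh2 : h2 n = 0) :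
    Acoef f1 f2 (n + 1) = Acoef h1 h2 (n + 1) + (f1 n * h2 1 + h1 1 * f2 n) := by
  have hmid : ∑ i ∈ Finset.Ico 2 n, f1 i * f2 (n + 1 - i)
      = ∑ i ∈ Finset.Ico 2 n, h1 i * h2 (n + 1 - i) :=
    Finset.sum_congr rfl fun i hi => by
      rw [Finset.mem_Ico] at hi
      rw [hf1 ⟨by omega, hi.2⟩, hf2 ⟨by omega, by omega⟩]
  simp only [Acoef, show ((n : ℤ) + 1).toNat = n + 1 by omega]
  rw [Finset.sum_Ico_succ_top (by omega), Finset.sum_Ico_succ_top (by omega),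
    Finset.sum_eq_sum_Ico_succ_bot (by omega : 1 < n),
    Finset.sum_eq_sum_Ico_succ_bot (by omega : 1 < n), hmid, Nat.add_sub_cancel_left,
    Nat.add_sub_cancel, hf1 ⟨le_rfl, by omega⟩, hf2 ⟨le_rfl, by omega⟩, hh1, hh2]
  ring

theorem Bcoef_congr (hf1 : EqOn f1 h1 (Ico 1 n)) (hf2 : EqOn f2 h2 (Ico 1 n)) {m : ℤ}
    (hm : m < n) : Bcoef f1 f2 m = Bcoef h1 h2 m := by
  unfold Bcoef
  split_ifs
  · rw [Acoef_congr hf1 hf2 (by omega)]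
    congr 1
    refine Finset.sum_congr rfl fun j hj => ?_
    rw [Finset.mem_Icc] at hj
    rw [Acoef_congr hf1 hf2 (by omega)]
  · rfl

theorem Bcoef_natCast_eq_add (hn : 2 ≤ n) (hf1 : EqOn f1 h1 (Ico 1 n))
    (hf2 : EqOn f2 h2 (Ico 1 n)) (hh1 : h1 n = 0) (hh2 : h2 n = 0) :
    Bcoef f1 f2 n = Bcoef h1 h2 n + ((n : ℂ) + 1) / 2 * (f1 n * h2 1 + h1 1 * f2 n) := by
  have hsum : ∑ j ∈ Finset.Icc 2 n, (-1 : ℂ) ^ (n - j) * Acoef f1 f2 j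
      = ∑ j ∈ Finset.Icc 2 n, (-1 : ℂ) ^ (n - j) * Acoef h1 h2 j :=
    Finset.sum_congr rfl fun j hj => by
      rw [Finset.mem_Icc] at hj
      rw [Acoef_congr hf1 hf2 (by omega)]
  simp only [Bcoef, if_pos (by omega : (1 : ℤ) ≤ n), Int.toNat_natCast, hsum,
    Acoef_natCast_add_one_eq_add hn hf1 hf2 hh1 hh2]
  push_cast
  ring

theorem Ccoef_congr (hf1 : EqOn f1 h1 (Ico 1 n)) (hf3 : EqOn f3 h3 (Ico 1 n)) {m : ℤ}
    (hm : m < n) (w mPhi : ℂ) : Ccoef f1 f3 w mPhi m = Ccoef h1 h3 w mPhi m := by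
  unfold Ccoef
  split_ifs
  · rfl
  · have hf3' : ∀ i ∈ Finset.Ico 1 m.toNat,
        f3 i * f3 (m.toNat - i) = h3 i * h3 (m.toNat - i) := fun i hi => by
      rw [Finset.mem_Ico] at hi
      rw [hf3 ⟨hi.1, by omega⟩, hf3 ⟨by omega, by omega⟩]
    have hf1' : ∀ j ∈ Finset.Icc 1 m.toNat,
        (-1 : ℂ) ^ (m.toNat - j) * ((m.toNat - j + 1 : ℕ) : ℂ) * f1 j
          = (-1 : ℂ) ^ (m.toNat - j) * ((m.toNat - j + 1 : ℕ) : ℂ) * h1 j := fun j hj => by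
      rw [Finset.mem_Icc] at hj
      rw [hf1 ⟨hj.1, by omega⟩]
    rw [Finset.sum_congr rfl hf3', Finset.sum_congr rfl hf1', hf3 ⟨by omega, by omega⟩,
      hf1 ⟨by omega, by omega⟩]
  · rfl

theorem Ccoef_natCast_eq_sub (hn : 1 ≤ n) (hf1 : EqOn f1 h1 (Ico 1 n))
    (hf3 : EqOn f3 h3 (Ico 1 n)) (hh1 : h1 n = 0) (hh3 : h3 n = 0) (w mPhi : ℂ) :
    Ccoef f1 f3 w mPhi n = Ccoef h1 h3 w mPhi n
      - (C (mPhi ^ 2 * f1 n) + C (2 * w * f3 n) * X + C (f1 n) * X ^ 2) := by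
  have hf3' : ∀ i ∈ Finset.Ico 1 n, f3 i * f3 (n - i) = h3 i * h3 (n - i) := fun i hi => by
    rw [Finset.mem_Ico] at hi
    rw [hf3 ⟨hi.1, hi.2⟩, hf3 ⟨by omega, by omega⟩]
  have hf1' : ∀ j ∈ Finset.Icc 1 (n - 1), (-1 : ℂ) ^ (n - j) * ((n - j + 1 : ℕ) : ℂ) * f1 j
      = (-1 : ℂ) ^ (n - j) * ((n - j + 1 : ℕ) : ℂ) * h1 j := fun j hj => by
    rw [Finset.mem_Icc] at hj
    rw [hf1 ⟨hj.1, by omega⟩]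
  obtain ⟨k, rfl⟩ : ∃ k, n = k + 1 := ⟨n - 1, by omega⟩
  simp only [Ccoef, if_neg (by omega : ((k + 1 : ℕ) : ℤ) ≠ 0),
    if_pos (by omega : (1 : ℤ) ≤ (k + 1 : ℕ)),
    Int.toNat_natCast, Finset.sum_congr rfl hf3', Finset.sum_Icc_succ_top (by omega : 1 ≤ k + 1)]
  rw [Nat.add_sub_cancel] at hf1'
  rw [Finset.sum_congr rfl hf1', hh1, hh3]
  simp only [Nat.sub_self, zero_add, pow_zero, Nat.cast_one, one_mul, map_add, map_mul, map_sub,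
    map_neg, mul_zero, add_zero, map_zero]
  ring

end TopCoefficients

section Entries

/-- At `ρ = -n/2` the terms `A_{n+2}·ρ(ρ-1)` and `A_{n+2}·ρ(n+2)/2` (from `B_{n+1}`) cancel: this
is why `f_{a,n+1}` does not enter the determinant. -/
theorem Ment_natCast_one_neg_half (f1 f2 f3 : ℕ → ℂ) (w mPhi : ℂ) (n : ℕ) :
    Ment f1 f2 f3 w mPhi (-(n : ℂ) / 2) n 1
      = C ((n : ℂ) / 2 * ∑ j ∈ Finset.Icc 2 (n + 1), (-1 : ℂ) ^ (n + 1 - j) * Acoef f1 f2 j)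
        + Ccoef f1 f3 w mPhi n := by
  simp only [Ment, Bcoef, Nat.cast_one, show (n : ℤ) - 1 + 3 = n + 1 + 1 by ring,
    show (n : ℤ) - 1 + 2 = n + 1 by ring, show (n : ℤ) - 1 + 1 = n by ring,
    if_pos (by omega : (1 : ℤ) ≤ n + 1), show ((n : ℤ) + 1).toNat = n + 1 by omega,
    ← map_add]
  congr 2
  push_cast
  ring

variable {n : ℕ} {f1 f2 f3 h1 h2 h3 : ℕ → ℂ}

theorem Ment_congr (hf1 : EqOn f1 h1 (Ico 1 n)) (hf2 : EqOn f2 h2 (Ico 1 n))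
    (hf3 : EqOn f3 h3 (Ico 1 n)) {K S : ℕ} (hKS : (K : ℤ) - S + 3 ≤ n) (w mPhi ρ : ℂ) :
    Ment f1 f2 f3 w mPhi ρ K S = Ment h1 h2 h3 w mPhi ρ K S := by
  rw [Ment, Ment, Acoef_congr hf1 hf2 hKS, Bcoef_congr hf1 hf2 (by omega),
    Ccoef_congr hf1 hf3 (by omega)]

theorem Ment_eq_add_of_sub_add_two_eq (hn : 2 ≤ n) (hf1 : EqOn f1 h1 (Ico 1 n))
    (hf2 : EqOn f2 h2 (Ico 1 n)) (hf3 : EqOn f3 h3 (Ico 1 n)) (hh1 : h1 n = 0) (hh2 : h2 n = 0)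
    {K S : ℕ} (hKS : (K : ℤ) - S + 2 = n) (w mPhi ρ : ℂ) :
    Ment f1 f2 f3 w mPhi ρ K S = Ment h1 h2 h3 w mPhi ρ K S
      + C ((f1 n * h2 1 + h1 1 * f2 n) * ((ρ + S - 1) * (ρ + S - 2 + ((n : ℂ) + 1) / 2))) := by
  rw [Ment, Ment, show (K : ℤ) - S + 3 = n + 1 by omega, hKS,
    Acoef_natCast_add_one_eq_add hn hf1 hf2 hh1 hh2, Bcoef_natCast_eq_add hn hf1 hf2 hh1 hh2,
    Ccoef_congr hf1 hf3 (by omega)]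
  simp only [map_add, map_mul]
  ring

theorem Ment_natCast_one_neg_half_eq_add (hn : 2 ≤ n) (hf1 : EqOn f1 h1 (Ico 1 n))
    (hf2 : EqOn f2 h2 (Ico 1 n)) (hf3 : EqOn f3 h3 (Ico 1 n)) (hh1 : h1 n = 0) (hh2 : h2 n = 0)
    (hh3 : h3 n = 0) (w mPhi : ℂ) :
    Ment f1 f2 f3 w mPhi (-(n : ℂ) / 2) n 1 = Ment h1 h2 h3 w mPhi (-(n : ℂ) / 2) n 1
      + (C ((n : ℂ) / 2 * (f1 n * h2 1 + h1 1 * f2 n) - mPhi ^ 2 * f1 n)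
        - C (2 * w * f3 n) * X - C (f1 n) * X ^ 2) := by
  have hsum : ∀ F1 F2 : ℕ → ℂ,
      ∑ j ∈ Finset.Icc 2 (n + 1), (-1 : ℂ) ^ (n + 1 - j) * Acoef F1 F2 j
        = ∑ j ∈ Finset.Icc 2 n, (-1 : ℂ) ^ (n + 1 - j) * Acoef F1 F2 j
          + Acoef F1 F2 (n + 1) :=
    fun F1 F2 => by
      rw [Finset.sum_Icc_succ_top (by omega), Nat.sub_self, pow_zero, one_mul]
      push_cast
      rfl
  have hlow : ∑ j ∈ Finset.Icc 2 n, (-1 : ℂ) ^ (n + 1 - j) * Acoef f1 f2 j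
      = ∑ j ∈ Finset.Icc 2 n, (-1 : ℂ) ^ (n + 1 - j) * Acoef h1 h2 j :=
    Finset.sum_congr rfl fun j hj => by
      rw [Finset.mem_Icc] at hj
      rw [Acoef_congr hf1 hf2 (by omega)]
  rw [Ment_natCast_one_neg_half, Ment_natCast_one_neg_half, hsum, hsum, hlow,
    Acoef_natCast_add_one_eq_add hn hf1 hf2 hh1 hh2,
    Ccoef_natCast_eq_sub (by omega) hf1 hf3 hh1 hh3]
  simp only [map_add, map_mul, map_sub]
  ring

end Entries

section Rows

variable {m : ℕ} {f1 f2 f3 h1 h2 h3 : ℕ → ℂ} (w mPhi : ℂ)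

theorem Mmat_apply_of_lt (hf1 : EqOn f1 h1 (Ico 1 (m + 2))) (hf2 : EqOn f2 h2 (Ico 1 (m + 2)))
    (hf3 : EqOn f3 h3 (Ico 1 (m + 2))) (ρ : ℂ) {K : Fin (m + 2)} (hK : (K : ℕ) < m) :
    Mmat f1 f2 f3 w mPhi (m + 2) ρ K = Mmat h1 h2 h3 w mPhi (m + 2) ρ K :=
  funext fun _ => Ment_congr hf1 hf2 hf3 (by push_cast; omega) w mPhi ρ

theorem Mmat_apply_castSucc_last (hf1 : EqOn f1 h1 (Ico 1 (m + 2)))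
    (hf2 : EqOn f2 h2 (Ico 1 (m + 2))) (hf3 : EqOn f3 h3 (Ico 1 (m + 2))) (hh1 : h1 (m + 2) = 0)
    (hh2 : h2 (m + 2) = 0) :
    Mmat f1 f2 f3 w mPhi (m + 2) (-((m + 2 : ℕ) : ℂ) / 2) (Fin.last m).castSucc
      = Mmat h1 h2 h3 w mPhi (m + 2) (-((m + 2 : ℕ) : ℂ) / 2) (Fin.last m).castSucc
        + C ((f1 (m + 2) * h2 1 + h1 1 * f2 (m + 2)) * (((m + 2 : ℕ) : ℂ) / 4))
          • Pi.single 0 1 := by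
  funext S
  obtain ⟨_ | s, hs⟩ := S
  · simp only [Mmat, Pi.add_apply, Pi.smul_apply, Fin.val_castSucc, Fin.val_last]
    rw [Ment_eq_add_of_sub_add_two_eq (by omega) hf1 hf2 hf3 hh1 hh2 (by push_cast; ring),
      show (⟨0, hs⟩ : Fin (m + 2)) = 0 from rfl, Pi.single_eq_same, smul_eq_mul, mul_one]
    congr 3
    push_cast
    ring
  · simp only [Mmat, Pi.add_apply, Pi.smul_apply, Fin.val_castSucc, Fin.val_last]
    rw [Ment_congr hf1 hf2 hf3 (by push_cast; omega)]
    simp [Fin.ext_iff]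

theorem Mmat_apply_last (hf1 : EqOn f1 h1 (Ico 1 (m + 2))) (hf2 : EqOn f2 h2 (Ico 1 (m + 2)))
    (hf3 : EqOn f3 h3 (Ico 1 (m + 2))) (hh1 : h1 (m + 2) = 0) (hh2 : h2 (m + 2) = 0)
    (hh3 : h3 (m + 2) = 0) :
    Mmat f1 f2 f3 w mPhi (m + 2) (-((m + 2 : ℕ) : ℂ) / 2) (Fin.last (m + 1))
      = Mmat h1 h2 h3 w mPhi (m + 2) (-((m + 2 : ℕ) : ℂ) / 2) (Fin.last (m + 1))
        + ((C (((m + 2 : ℕ) : ℂ) / 2 * (f1 (m + 2) * h2 1 + h1 1 * f2 (m + 2))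
              - mPhi ^ 2 * f1 (m + 2)) - C (2 * w * f3 (m + 2)) * X - C (f1 (m + 2)) * X ^ 2)
            • Pi.single 0 1
          + C (-((f1 (m + 2) * h2 1 + h1 1 * f2 (m + 2)) * m / 4)) • Pi.single 1 1) := by
  funext S
  obtain ⟨_ | _ | s, hs⟩ := S
  · simp only [Mmat, Pi.add_apply, Pi.smul_apply, Fin.val_last]
    rw [Ment_natCast_one_neg_half_eq_add (by omega) hf1 hf2 hf3 hh1 hh2 hh3]
    simp
  · simp only [Mmat, Pi.add_apply, Pi.smul_apply, Fin.val_last]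
    rw [Ment_eq_add_of_sub_add_two_eq (by omega) hf1 hf2 hf3 hh1 hh2 (by push_cast; ring),
      show (⟨1, hs⟩ : Fin (m + 2)) = 1 from rfl, Pi.single_eq_same,
      Pi.single_eq_of_ne one_ne_zero, smul_zero, smul_eq_mul, mul_one]
    simp only [zero_add]
    congr 2
    push_cast
    ring
  · simp only [Mmat, Pi.add_apply, Pi.smul_apply, Fin.val_last]
    rw [Ment_congr hf1 hf2 hf3 (by push_cast; omega)]
    simp

/-- With `n = m + 2`, the rows `(Fin.last m).castSucc` and `Fin.last (m + 1)` are the rows `n - 1`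
and `n` of the paper, and `Pi.single 0 1`, `Pi.single 1 1` are the unit rows `e₁`, `e₂`. -/
theorem det_Mmat_neg_half_eq (hf1 : EqOn f1 h1 (Ico 1 (m + 2)))
    (hf2 : EqOn f2 h2 (Ico 1 (m + 2))) (hf3 : EqOn f3 h3 (Ico 1 (m + 2))) (hh1 : h1 (m + 2) = 0)
    (hh2 : h2 (m + 2) = 0) (hh3 : h3 (m + 2) = 0) :
    (Mmat f1 f2 f3 w mPhi (m + 2) (-((m + 2 : ℕ) : ℂ) / 2)).det
      = (Mmat h1 h2 h3 w mPhi (m + 2) (-((m + 2 : ℕ) : ℂ) / 2)).det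
        + C ((f1 (m + 2) * h2 1 + h1 1 * f2 (m + 2)) * (((m + 2 : ℕ) : ℂ) / 4))
          * ((Mmat h1 h2 h3 w mPhi (m + 2) (-((m + 2 : ℕ) : ℂ) / 2)).updateRow
              (Fin.last m).castSucc (Pi.single 0 1)).det
        + (C (((m + 2 : ℕ) : ℂ) / 2 * (f1 (m + 2) * h2 1 + h1 1 * f2 (m + 2))
              - mPhi ^ 2 * f1 (m + 2)) - C (2 * w * f3 (m + 2)) * X - C (f1 (m + 2)) * X ^ 2)
          * ((Mmat h1 h2 h3 w mPhi (m + 2) (-((m + 2 : ℕ) : ℂ) / 2)).updateRow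
              (Fin.last (m + 1)) (Pi.single 0 1)).det
        + C (-((f1 (m + 2) * h2 1 + h1 1 * f2 (m + 2)) * m / 4))
          * ((Mmat h1 h2 h3 w mPhi (m + 2) (-((m + 2 : ℕ) : ℂ) / 2)).updateRow
              (Fin.last (m + 1)) (Pi.single 1 1)).det := by
  have hquad : C (-((f1 (m + 2) * h2 1 + h1 1 * f2 (m + 2)) * m / 4))
      * (((Mmat h1 h2 h3 w mPhi (m + 2) (-((m + 2 : ℕ) : ℂ) / 2)).updateRow
        (Fin.last m).castSucc (Pi.single 0 1)).updateRow (Fin.last (m + 1))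
          (Pi.single 1 1)).det = 0 := by
    rcases (isLowerHessenberg_Mmat h1 h2 h3 w mPhi _
      (m + 2)).eq_zero_or_det_updateRow_updateRow_single_eq_zero with h | h
    · simp [h]
    · rw [h, mul_zero]
  rw [Matrix.eq_updateRow_updateRow (M := Mmat f1 f2 f3 w mPhi _ _)
      (N := Mmat h1 h2 h3 w mPhi _ _) (i := (Fin.last m).castSucc) (j := Fin.last (m + 1))
      fun k hi hj => Mmat_apply_of_lt w mPhi hf1 hf2 hf3 _ ?_,
    Mmat_apply_castSucc_last w mPhi hf1 hf2 hf3 hh1 hh2,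
    Mmat_apply_last w mPhi hf1 hf2 hf3 hh1 hh2 hh3,
    Matrix.det_updateRow_add_smul_single_updateRow_add_smul_single _ (Fin.castSucc_lt_last _).ne,
    mul_assoc _ (C _), hquad, mul_zero, add_zero]
  have := k.isLt
  simp only [ne_eq, Fin.ext_iff, Fin.val_castSucc, Fin.val_last] at hi hj
  omega

end Rows

section CofactorDegrees

variable (h1 h2 h3 : ℕ → ℂ) (w mPhi ρ : ℂ) (m : ℕ)

theorem natDegree_det_Mmat_updateRow_last_single_zero :
    ((Mmat h1 h2 h3 w mPhi (m + 2) ρ).updateRow (Fin.last (m + 1)) (Pi.single 0 1)).det.natDegree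
      = 0 :=
  (isLowerHessenberg_Mmat _ _ _ _ _ _ _).natDegree_det_updateRow_last_single_zero
    fun _ => natDegree_Ment_self_add_one ..

theorem natDegree_det_Mmat_updateRow_castSucc_last_single_zero_le :
    ((Mmat h1 h2 h3 w mPhi (m + 2) ρ).updateRow (Fin.last m).castSucc
      (Pi.single 0 1)).det.natDegree ≤ 2 :=
  ((isLowerHessenberg_Mmat _ _ _ _ _ _ _).natDegree_det_updateRow_castSucc_last_single_zero_le
    fun _ => natDegree_Ment_self_add_one ..).trans (natDegree_Ment_le ..)

theorem natDegree_det_Mmat_updateRow_last_single_one_le :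
    ((Mmat h1 h2 h3 w mPhi (m + 2) ρ).updateRow (Fin.last (m + 1)) (Pi.single 1 1)).det.natDegree
      ≤ 2 :=
  ((isLowerHessenberg_Mmat _ _ _ _ _ _ _).natDegree_det_updateRow_last_single_one_le
    fun _ => natDegree_Ment_self_add_one ..).trans (natDegree_Ment_le ..)

end CofactorDegrees

/-- at `ρ = -n/2`, `det 𝓜⁽ⁿ⁾(-n/2)` is an affine function of
`(f_{1,n}, f_{2,n}, f_{3,n})`, independent of `f_{a,n+1}`, with `f_{3,n}` appearing only
in the `k¹` coefficient and `f_{1,n}, f_{2,n}` only in the `k⁰, k¹, k²` coefficients. -/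
theorem det_M_affine_in_top_metric_derivatives
    (n : ℕ) (hn : 2 ≤ n) (w mPhi : ℂ) (g1 g2 g3 : ℕ → ℂ) :
    ∃ (P0 P1 P2 : Polynomial ℂ) (c : ℂ),
      P1.degree ≤ 2 ∧ P2.degree ≤ 2 ∧
      ∀ f1 f2 f3 : ℕ → ℂ,
        (∀ j : ℕ, 1 ≤ j → j ≤ n - 1 → f1 j = g1 j ∧ f2 j = g2 j ∧ f3 j = g3 j) →
        (Mmat f1 f2 f3 w mPhi n (-(n : ℂ) / 2)).det
          = Polynomial.C (f1 n) * P1 + Polynomial.C (f2 n) * P2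
              + Polynomial.C (c * f3 n) * Polynomial.X + P0 := by
  obtain ⟨m, rfl⟩ : ∃ m, n = m + 2 := ⟨n - 2, by omega⟩
  let trunc (g : ℕ → ℂ) (j : ℕ) : ℂ := if j < m + 2 then g j else 0
  set N := Mmat (trunc g1) (trunc g2) (trunc g3) w mPhi (m + 2) (-((m + 2 : ℕ) : ℂ) / 2)
    with hN
  set D0 := (N.updateRow (Fin.last m).castSucc (Pi.single 0 1)).det with hD0
  set D2 := (N.updateRow (Fin.last (m + 1)) (Pi.single 1 1)).det with hD2
  obtain ⟨d, hd⟩ : ∃ d, (N.updateRow (Fin.last (m + 1)) (Pi.single 0 1)).det = C d :=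
    ⟨_, eq_C_of_natDegree_eq_zero (natDegree_det_Mmat_updateRow_last_single_zero ..)⟩
  have hdeg (a b c : ℂ) {q : ℂ[X]} (hq : q.natDegree ≤ 2) :
      (C a * D0 + C b * D2 + C c * q).degree ≤ 2 :=
    degree_le_of_natDegree_le <| natDegree_add_le_of_degree_le (natDegree_add_le_of_degree_le
      ((natDegree_C_mul_le _ _).trans
        (natDegree_det_Mmat_updateRow_castSucc_last_single_zero_le ..))
      ((natDegree_C_mul_le _ _).trans (natDegree_det_Mmat_updateRow_last_single_one_le ..)))
      ((natDegree_C_mul_le _ _).trans hq)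
  refine ⟨N.det,
    C (trunc g2 1 * (((m + 2 : ℕ) : ℂ) / 4)) * D0 + C (-(trunc g2 1 * m / 4)) * D2
      + C d * (C (((m + 2 : ℕ) : ℂ) / 2 * trunc g2 1 - mPhi ^ 2) - X ^ 2),
    C (trunc g1 1 * (((m + 2 : ℕ) : ℂ) / 4)) * D0 + C (-(trunc g1 1 * m / 4)) * D2
      + C d * C (((m + 2 : ℕ) : ℂ) / 2 * trunc g1 1),
    -(2 * w * d), hdeg _ _ _ (by compute_degree!), hdeg _ _ _ (by compute_degree!),
    fun f1 f2 f3 hf => ?_⟩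
  have htrunc {f g : ℕ → ℂ} (h : ∀ j, 1 ≤ j → j ≤ m + 2 - 1 → f j = g j) :
      EqOn f (trunc g) (Ico 1 (m + 2)) := fun j ⟨hj1, hj2⟩ => by
    simp only [trunc, if_pos hj2]
    exact h j hj1 (by omega)
  rw [det_Mmat_neg_half_eq w mPhi (htrunc fun j h1 h2 => (hf j h1 h2).1)
    (htrunc fun j h1 h2 => (hf j h1 h2).2.1) (htrunc fun j h1 h2 => (hf j h1 h2).2.2)
    (by simp [trunc]) (by simp [trunc]) (by simp [trunc]), ← hN, ← hD0, ← hD2, hd]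
  simp only [div_eq_mul_inv, map_add, map_mul, map_sub, map_neg, map_natCast]
  ring
end

section
/- Let T be a nonzero real number, 𝔴 ∈ ℂ, and suppose the horizon coefficients satisfy the Hawking-temperature relation f_{1,1}·f_{2,1} = (4πT)², so that A₂ = (4πT)² and B₁ = A₂. Set ρ = −i𝔴/(4πT). Then for every integer K ≥ 1 the superdiagonal expression M_{K,K+1} = A₂·(ρ+K)(ρ+K−1) + B₁·(ρ+K) + C₀, with C₀ = 𝔴², equals 8πT·K·(2πT·K − i𝔴). In particular, M_{K,K+1} = 0 if and only if 𝔴 = −2πi T K. -/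
open Complex

/-- with `A₂ = B₁ = f_{1,1} f_{2,1} = (4πT)²`, `C₀ = 𝔴²` and
`ρ = -i𝔴/(4πT)`, the superdiagonal expression
`M_{K,K+1} = A₂(ρ+K)(ρ+K-1) + B₁(ρ+K) + C₀` equals `8πT·K·(2πT·K - i𝔴)` for every
`K ≥ 1`, and it vanishes iff `𝔴 = -2πi T K`. -/
theorem superdiagonal_entry_eq_and_vanishing_iff
    (T : ℝ) (hT : T ≠ 0) (w f11 f21 : ℂ)
    (hf : f11 * f21 = (4 * (Real.pi : ℂ) * (T : ℂ)) ^ 2) :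
    ∀ K : ℕ, 1 ≤ K → ∀ ρ : ℂ,
      ρ = -Complex.I * w / (4 * (Real.pi : ℂ) * (T : ℂ)) →
      ((f11 * f21) * ((ρ + (K : ℂ)) * (ρ + (K : ℂ) - 1))
          + (f11 * f21) * (ρ + (K : ℂ)) + w ^ 2
        = 8 * (Real.pi : ℂ) * (T : ℂ) * (K : ℂ)
            * (2 * (Real.pi : ℂ) * (T : ℂ) * (K : ℂ) - Complex.I * w))
      ∧ ((f11 * f21) * ((ρ + (K : ℂ)) * (ρ + (K : ℂ) - 1))
            + (f11 * f21) * (ρ + (K : ℂ)) + w ^ 2 = 0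
          ↔ w = -2 * (Real.pi : ℂ) * Complex.I * (T : ℂ) * (K : ℂ)) := by
  intro K hK ρ hρ
  have hTC : (T : ℂ) ≠ 0 := Complex.ofReal_ne_zero.mpr hT
  have hpi : (Real.pi : ℂ) ≠ 0 := Complex.ofReal_ne_zero.mpr Real.pi_ne_zero
  have hK0 : (K : ℂ) ≠ 0 := Nat.cast_ne_zero.mpr (by omega)
  have h4 : (4 : ℂ) * (Real.pi : ℂ) * (T : ℂ) ≠ 0 := by
    simp [hpi, hTC]
  have heq : (f11 * f21) * ((ρ + (K : ℂ)) * (ρ + (K : ℂ) - 1))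
          + (f11 * f21) * (ρ + (K : ℂ)) + w ^ 2
        = 8 * (Real.pi : ℂ) * (T : ℂ) * (K : ℂ)
            * (2 * (Real.pi : ℂ) * (T : ℂ) * (K : ℂ) - Complex.I * w) := by
    subst hρ
    rw [hf]
    field_simp
    ring_nf
    simp [Complex.I_sq]
  refine ⟨heq, ?_⟩
  rw [heq]
  constructor
  · intro h
    have h8 : (8 : ℂ) * (Real.pi : ℂ) * (T : ℂ) * (K : ℂ) ≠ 0 := by
      simp [hpi, hTC, hK0]
    have := (mul_eq_zero.mp h).resolve_left h8
    have hw : Complex.I * w = 2 * (Real.pi : ℂ) * (T : ℂ) * (K : ℂ) := by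
      linear_combination -this
    have := congrArg (fun z => -Complex.I * z) hw
    simp only [neg_mul, ← mul_assoc, Complex.I_mul_I] at this
    simp at this
    rw [this]; ring
  · intro h
    rw [h]
    ring_nf
    simp [Complex.I_sq]
end

section
/- Let n ≥ 2 and let M be an n×n lower Hessenberg matrix over a commutative ring. Then the (n,2)-minor of M (the determinant of the submatrix obtained by deleting row n and column 2) equals M_{1,1}·∏_{S=2}^{n−1} M_{S,S+1}; equivalently, the (n,2)-cofactor of M equals (−1)^{n}·M_{1,1}·∏_{S=2}^{n−1} M_{S,S+1}. -/
/-- for an `n×n` lower Hessenberg matrix (`n ≥ 2`), the `(n,2)`-minor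
(delete row `n` and column `2`) equals `M_{1,1}·∏_{S=2}^{n-1} M_{S,S+1}`; equivalently
the `(n,2)`-cofactor equals `(-1)^n·M_{1,1}·∏_{S=2}^{n-1} M_{S,S+1}`. -/
theorem hessenberg_minor_n2
    {R : Type*} [CommRing R] (n : ℕ) (hn : 2 ≤ n)
    (M : Matrix (Fin n) (Fin n) R)
    (hM : ∀ K S : Fin n, (K : ℕ) + 1 < (S : ℕ) → M K S = 0) :
    (M.submatrix
        (fun i : Fin (n - 1) => (⟨i.1, by have := i.2; omega⟩ : Fin n))
        (fun j : Fin (n - 1) =>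
          (⟨if j.1 = 0 then 0 else j.1 + 1, by have := j.2; split <;> omega⟩ : Fin n))).det
      = M ⟨0, by omega⟩ ⟨0, by omega⟩ *
          ∏ S : Fin (n - 2),
            M ⟨S.1 + 1, by have := S.2; omega⟩ ⟨S.1 + 2, by have := S.2; omega⟩
    ∧ (-1 : R) ^ n *
        (M.submatrix
          (fun i : Fin (n - 1) => (⟨i.1, by have := i.2; omega⟩ : Fin n))
          (fun j : Fin (n - 1) =>
            (⟨if j.1 = 0 then 0 else j.1 + 1, by have := j.2; split <;> omega⟩ : Fin n))).det
      = (-1 : R) ^ n * (M ⟨0, by omega⟩ ⟨0, by omega⟩ *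
          ∏ S : Fin (n - 2),
            M ⟨S.1 + 1, by have := S.2; omega⟩ ⟨S.1 + 2, by have := S.2; omega⟩) := by
  have hdet :
      (M.submatrix
        (fun i : Fin (n - 1) => (⟨i.1, by have := i.2; omega⟩ : Fin n))
        (fun j : Fin (n - 1) =>
          (⟨if j.1 = 0 then 0 else j.1 + 1, by have := j.2; split <;> omega⟩ : Fin n))).det
      = M ⟨0, by omega⟩ ⟨0, by omega⟩ *
          ∏ S : Fin (n - 2),
            M ⟨S.1 + 1, by have := S.2; omega⟩ ⟨S.1 + 2, by have := S.2; omega⟩ := by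
    rw [Matrix.det_of_lowerTriangular _ (by
      intro i j hij
      have hij' : (i : ℕ) < (j : ℕ) := hij
      simp only [Matrix.submatrix_apply]
      apply hM
      show (i : ℕ) + 1 < (if j.1 = 0 then 0 else j.1 + 1)
      rw [if_neg (by omega : ¬ j.1 = 0)]
      omega)]
    have e : (n - 2) + 1 = n - 1 := by omega
    rw [← Fin.prod_congr' _ e, Fin.prod_univ_succ]
    congr 1
  exact ⟨hdet, by rw [hdet]⟩
end

section
/- Let n ≥ 4 and let 2 < i < n. If M and M′ are n×n lower Hessenberg matrices over a commutative ring that agree in every entry except possibly the (n−1,1) entry, then their (n,i)-minors coincide: the determinant of the submatrix of M obtained by deleting row n and column i equals the determinant of the corresponding submatrix of M′. In other words, for 2 < i < n the (n,i)-minor of a lower Hessenberg matrix does not depend on the entry M_{n−1,1}. -/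
/-- for `n ≥ 4` and `2 < i < n`, the `(n,i)`-minor of an `n×n`
lower Hessenberg matrix does not depend on the `(n-1,1)` entry: if two lower Hessenberg
matrices agree everywhere except possibly at the `(n-1,1)` entry (1-based), then the
determinants of the submatrices obtained by deleting row `n` and column `i` coincide. -/
theorem hessenberg_minor_ni_independent_of_entry
    {R : Type*} [CommRing R] (n i : ℕ) (hn : 4 ≤ n) (hi1 : 2 < i) (hi2 : i < n)
    (M M' : Matrix (Fin n) (Fin n) R)
    (hM : ∀ K S : Fin n, (K : ℕ) + 1 < (S : ℕ) → M K S = 0)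
    (hM' : ∀ K S : Fin n, (K : ℕ) + 1 < (S : ℕ) → M' K S = 0)
    (hagree : ∀ K S : Fin n, ¬((K : ℕ) = n - 2 ∧ (S : ℕ) = 0) → M K S = M' K S) :
    (M.submatrix
        (fun r : Fin (n - 1) => (⟨r.1, by have := r.2; omega⟩ : Fin n))
        (fun j : Fin (n - 1) =>
          (⟨if j.1 + 1 < i then j.1 else j.1 + 1, by have := j.2; split <;> omega⟩ : Fin n))).det
      = (M'.submatrix
          (fun r : Fin (n - 1) => (⟨r.1, by have := r.2; omega⟩ : Fin n))
          (fun j : Fin (n - 1) =>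
            (⟨if j.1 + 1 < i then j.1 else j.1 + 1,
              by have := j.2; split <;> omega⟩ : Fin n))).det := by
  set A := (M.submatrix
        (fun r : Fin (n - 1) => (⟨r.1, by have := r.2; omega⟩ : Fin n))
        (fun j : Fin (n - 1) =>
          (⟨if j.1 + 1 < i then j.1 else j.1 + 1, by have := j.2; split <;> omega⟩ : Fin n)))
    with hA
  set A' := (M'.submatrix
        (fun r : Fin (n - 1) => (⟨r.1, by have := r.2; omega⟩ : Fin n))
        (fun j : Fin (n - 1) =>
          (⟨if j.1 + 1 < i then j.1 else j.1 + 1, by have := j.2; split <;> omega⟩ : Fin n)))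
    with hA'
  have hn1 : n - 2 < n - 1 := by omega
  have h0 : 0 < n - 1 := by omega
  set r : Fin (n - 1) := ⟨n - 2, hn1⟩ with hr
  set z : Fin (n - 1) := ⟨0, h0⟩ with hz
  set c : R := A' r z - A r z with hc
  -- agreement away from (r,z)
  have key : ∀ K S : Fin (n-1), ¬(K = r ∧ S = z) → A K S = A' K S := by
    intro K S h
    apply hagree
    intro ⟨hK, hS⟩
    apply h
    constructor
    · exact Fin.ext hK
    · apply Fin.ext
      simp only [hz]
      simp only at hS
      split at hS <;> omega
  have hA'eq : A' = A.updateRow r (A r + c • (Pi.single z 1 : Fin (n-1) → R)) := by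
    ext K S
    by_cases hK : K = r
    · subst hK
      rw [Matrix.updateRow_self]
      by_cases hS : S = z
      · subst hS
        simp [hc]
      · have h1 : (Pi.single z 1 : Fin (n-1) → R) S = 0 := Pi.single_eq_of_ne hS 1
        simp only [Pi.add_apply, Pi.smul_apply, h1, smul_zero, add_zero]
        exact (key r S (fun h => hS h.2)).symm
    · rw [Matrix.updateRow_ne hK]
      exact (key K S (fun h => hK h.1)).symm
  have hdet0 : (A.updateRow r ((Pi.single z 1 : Fin (n-1) → R))).det = 0 := by
    apply Matrix.det_eq_zero_of_column_eq_zero ⟨n - 2, hn1⟩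
    intro K
    by_cases hK : K = r
    · subst hK
      rw [Matrix.updateRow_self]
      have hne : (⟨n-2, hn1⟩ : Fin (n-1)) ≠ z := by
        simp only [hz, ne_eq, Fin.mk.injEq]; omega
      exact Pi.single_eq_of_ne hne 1
    · rw [Matrix.updateRow_ne hK]
      rw [hA]
      simp only [Matrix.submatrix_apply]
      apply hM
      have hKlt : (K : ℕ) < n - 2 := by
        have := K.2
        have : (K : ℕ) ≠ n - 2 := fun h => hK (Fin.ext h)
        omega
      simp only
      split <;> omega
  rw [hA'eq, Matrix.det_updateRow_add, Matrix.det_updateRow_smul, hdet0,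
    Matrix.updateRow_eq_self]
  ring
end

section
/- Fix an integer n ≥ 2. For every ρ ∈ ℂ, the determinant det 𝓜⁽ⁿ⁾(ρ), viewed as a polynomial in k, has degree at most 2n, and its coefficient of k^{2n} equals (−f_{1,1})^n. In particular, if f_{1,1} ≠ 0 then det 𝓜⁽ⁿ⁾(ρ) has degree exactly 2n in k. -/
open Polynomial

open Polynomial

lemma Ccoef_deg (f1 f3 : ℕ → ℂ) (w mPhi : ℂ) (m : ℤ) :
    (Ccoef f1 f3 w mPhi m).degree ≤ 2 := by
  unfold Ccoef
  split_ifs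
  · exact (degree_C_le).trans (by norm_num)
  · compute_degree
  · exact bot_le

lemma Ment_deg (f1 f2 f3 : ℕ → ℂ) (w mPhi ρ : ℂ) (K S : ℕ) :
    (Ment f1 f2 f3 w mPhi ρ K S).degree ≤ 2 := by
  unfold Ment
  refine (degree_add_le _ _).trans (max_le ((degree_add_le _ _).trans (max_le ?_ ?_)) ?_)
  · exact degree_C_le.trans (by norm_num)
  · exact degree_C_le.trans (by norm_num)
  · exact Ccoef_deg _ _ _ _ _

lemma Ment_coeff2 (f1 f2 f3 : ℕ → ℂ) (w mPhi ρ : ℂ) (K S : ℕ) :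
    (Ment f1 f2 f3 w mPhi ρ K S).coeff 2
      = (Ccoef f1 f3 w mPhi ((K : ℤ) - (S : ℤ) + 1)).coeff 2 := by
  unfold Ment
  simp only [coeff_add, coeff_C]
  norm_num

lemma Ccoef_coeff2_of_nonpos (f1 f3 : ℕ → ℂ) (w mPhi : ℂ) (m : ℤ) (hm : m ≤ 0) :
    (Ccoef f1 f3 w mPhi m).coeff 2 = 0 := by
  unfold Ccoef
  split_ifs with h1 h2
  · simp only [coeff_C]; norm_num
  · omega
  · simp

lemma Ccoef_coeff2_one (f1 f3 : ℕ → ℂ) (w mPhi : ℂ) :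
    (Ccoef f1 f3 w mPhi 1).coeff 2 = -(f1 1) := by
  simp only [Ccoef, if_neg (by norm_num : (1:ℤ) ≠ 0), if_pos (le_refl (1:ℤ)), Int.toNat_one]
  simp only [coeff_sub, coeff_add, coeff_C_mul, coeff_X, coeff_X_pow, coeff_C]
  norm_num


/-- for every `ρ ∈ ℂ`, `det 𝓜⁽ⁿ⁾(ρ)` has degree at most `2n` in `k`,
its `k^{2n}` coefficient equals `(-f_{1,1})^n`, and if `f_{1,1} ≠ 0` its degree is
exactly `2n`. -/
theorem det_M_degree_and_leading_coeff
    (n : ℕ) (hn : 2 ≤ n) (w mPhi : ℂ) (f1 f2 f3 : ℕ → ℂ) (ρ : ℂ) :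
    (Mmat f1 f2 f3 w mPhi n ρ).det.degree ≤ (2 * n : ℕ)
    ∧ (Mmat f1 f2 f3 w mPhi n ρ).det.coeff (2 * n) = (-(f1 1)) ^ n
    ∧ (f1 1 ≠ 0 → (Mmat f1 f2 f3 w mPhi n ρ).det.degree = (2 * n : ℕ)) := by
  set M := Mmat f1 f2 f3 w mPhi n ρ with hM
  have hdeg : M.det.degree ≤ (2 * n : ℕ) := by
    rw [Matrix.det_apply']
    refine (degree_sum_le _ _).trans ?_
    refine Finset.sup_le fun σ _ => ?_
    refine (degree_mul_le _ _).trans ?_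
    rw [show ((2 * n : ℕ) : WithBot ℕ) = 0 + ((2 * n : ℕ) : WithBot ℕ) by rw [zero_add]]
    refine add_le_add (degree_intCast_le _) ((degree_prod_le _ _).trans ?_)
    calc ∑ i : Fin n, (M (σ i) i).degree ≤ ∑ _i : Fin n, ((2 : ℕ) : WithBot ℕ) :=
          Finset.sum_le_sum fun i _ => Ment_deg f1 f2 f3 w mPhi ρ _ _
      _ = ((2 * n : ℕ) : WithBot ℕ) := by
          rw [Finset.sum_const, Finset.card_univ, Fintype.card_fin]
          rw [show ((2 * n : ℕ) : WithBot ℕ) = (n : ℕ) * ((2:ℕ) : WithBot ℕ) by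
            push_cast; ring]
          simp [nsmul_eq_mul]
  have hL : ∀ (K S : Fin n), (M K S).coeff 2
      = (Ccoef f1 f3 w mPhi ((K.1 + 1 : ℕ) - (S.1 + 1 : ℕ) + 1 : ℤ)).coeff 2 := by
    intro K S
    rw [hM]
    exact Ment_coeff2 f1 f2 f3 w mPhi ρ _ _
  have hcoeff : M.det.coeff (2 * n) = (-(f1 1)) ^ n := by
    have key : M.det.coeff (2 * n)
        = (Matrix.of fun K S : Fin n => (M K S).coeff 2).det := by
      rw [Matrix.det_apply', Matrix.det_apply', finset_sum_coeff]
      refine Finset.sum_congr rfl fun σ _ => ?_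
      rw [coeff_intCast_mul]
      congr 1
      have h2 := coeff_prod_of_natDegree_le (s := (Finset.univ : Finset (Fin n)))
        (fun i => M (σ i) i) 2 (fun i _ => natDegree_le_iff_degree_le.2 (Ment_deg _ _ _ _ _ _ _ _))
      rw [show (2 * n) = (Finset.univ : Finset (Fin n)).card * 2 by
        rw [Finset.card_univ, Fintype.card_fin]; ring]
      rw [h2]
      rfl
    have hLT : (Matrix.of fun K S : Fin n => (M K S).coeff 2).BlockTriangular
        OrderDual.toDual := by
      intro i j hij
      have hij' : i < j := hij
      rw [Matrix.of_apply, hL]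
      refine Ccoef_coeff2_of_nonpos _ _ _ _ _ ?_
      have : (i : ℕ) < (j : ℕ) := hij'
      push_cast
      omega
    rw [key, Matrix.det_of_lowerTriangular _ hLT]
    have hdiag : ∀ i : Fin n, (Matrix.of fun K S : Fin n => (M K S).coeff 2) i i
        = -(f1 1) := by
      intro i
      rw [Matrix.of_apply, hL]
      rw [show ((i.1 + 1 : ℕ) - (i.1 + 1 : ℕ) + 1 : ℤ) = 1 by push_cast; ring]
      exact Ccoef_coeff2_one f1 f3 w mPhi
    simp [hdiag]
  refine ⟨hdeg, hcoeff, fun hf => ?_⟩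
  refine le_antisymm hdeg (le_degree_of_ne_zero ?_)
  rw [hcoeff]
  exact pow_ne_zero _ (neg_ne_zero.2 hf)
end

section
/- Let 𝔴₁, m, E₁k, E₁k², E₂k², E₂k³, E₂k⁴ ∈ ℂ with 𝔴₁ ≠ 0 and E₁k² ≠ m². Then the triple f₁₂ = −(𝔴₁²/(2(E₁k² − m²)³))·[m⁴ + (3E₂k² − 9(E₁k)² − 12E₁k²)·m² + 12(E₁k²)² + 12(E₁k)²·E₁k² − 4E₁k²·E₂k² + E₂k⁴], f₂₂ = −(1/(2(E₁k² − m²)))·[3m⁴ + (E₂k² − 3(E₁k)² − 20E₁k²)·m² + 3E₂k⁴ + 12(E₁k)²·E₁k² + 20(E₁k²)² − 4E₁k²·E₂k²], and f₃₂ = (𝔴₁/(4(E₁k² − m²)³))·[(3(E₁k)³ − 12E₁k·E₁k² − E₁k·E₂k² + 2E₂k³)·m² + E₁k·m⁴ + 12E₁k·(E₁k²)² − 2E₁k²·E₂k³ + E₁k·E₂k⁴] satisfies the three linear equations: (i) (−4(E₁k²)³ + 9(E₁k²)²m² − 6E₁k²·m⁴ + m⁶)·f₁₂ + 𝔴₁²(4E₁k²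 − 3m²)·f₂₂ + 𝔴₁²(16(E₁k²)² + 4E₂k⁴ − 24E₁k²·m² + 4m⁴) = 0; (ii) (−E₁k·(E₁k²)² + 2E₁k·E₁k²·m² − E₁k·m⁴)·f₁₂ + E₁k·𝔴₁²·f₂₂ + 4𝔴₁·(E₁k² − m²)²·f₃₂ + 𝔴₁²(−8E₁k·E₁k² + 2E₂k³) = 0; (iii) (3(E₁k²)² − 6E₁k²·m² + 3m⁴)·f₁₂ − 𝔴₁²·f₂₂ + 𝔴₁²(12(E₁k)² + 8E₁k² − 4E₂k²) = 0. -/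
/-- the explicit triple `(f₁₂, f₂₂, f₃₂)` satisfies the three order-`2`
Vieta relations of the 3D rotating reconstruction.  Here `E₁k, E₁k2` denote
`E₁(k), E₁(k²)` and `E₂k2, E₂k3, E₂k4` denote `E₂(k²), E₂(k³), E₂(k⁴)`. -/
theorem second_order_rotating_reconstruction
    (𝔴₁ m E₁k E₁k2 E₂k2 E₂k3 E₂k4 : ℂ) (hw : 𝔴₁ ≠ 0) (hE : E₁k2 ≠ m ^ 2)
    (f₁₂ f₂₂ f₃₂ : ℂ)
    (hf₁₂ : f₁₂ = -(𝔴₁ ^ 2 / (2 * (E₁k2 - m ^ 2) ^ 3))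
        * (m ^ 4 + (3 * E₂k2 - 9 * E₁k ^ 2 - 12 * E₁k2) * m ^ 2
            + 12 * E₁k2 ^ 2 + 12 * E₁k ^ 2 * E₁k2 - 4 * E₁k2 * E₂k2 + E₂k4))
    (hf₂₂ : f₂₂ = -(1 / (2 * (E₁k2 - m ^ 2)))
        * (3 * m ^ 4 + (E₂k2 - 3 * E₁k ^ 2 - 20 * E₁k2) * m ^ 2
            + 3 * E₂k4 + 12 * E₁k ^ 2 * E₁k2 + 20 * E₁k2 ^ 2 - 4 * E₁k2 * E₂k2))
    (hf₃₂ : f₃₂ = 𝔴₁ / (4 * (E₁k2 - m ^ 2) ^ 3)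
        * ((3 * E₁k ^ 3 - 12 * E₁k * E₁k2 - E₁k * E₂k2 + 2 * E₂k3) * m ^ 2
            + E₁k * m ^ 4 + 12 * E₁k * E₁k2 ^ 2 - 2 * E₁k2 * E₂k3 + E₁k * E₂k4)) :
    ((-4 * E₁k2 ^ 3 + 9 * E₁k2 ^ 2 * m ^ 2 - 6 * E₁k2 * m ^ 4 + m ^ 6) * f₁₂
        + 𝔴₁ ^ 2 * (4 * E₁k2 - 3 * m ^ 2) * f₂₂
        + 𝔴₁ ^ 2 * (16 * E₁k2 ^ 2 + 4 * E₂k4 - 24 * E₁k2 * m ^ 2 + 4 * m ^ 4) = 0)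
    ∧ ((-E₁k * E₁k2 ^ 2 + 2 * E₁k * E₁k2 * m ^ 2 - E₁k * m ^ 4) * f₁₂
        + E₁k * 𝔴₁ ^ 2 * f₂₂
        + 4 * 𝔴₁ * (E₁k2 - m ^ 2) ^ 2 * f₃₂
        + 𝔴₁ ^ 2 * (-8 * E₁k * E₁k2 + 2 * E₂k3) = 0)
    ∧ ((3 * E₁k2 ^ 2 - 6 * E₁k2 * m ^ 2 + 3 * m ^ 4) * f₁₂
        - 𝔴₁ ^ 2 * f₂₂
        + 𝔴₁ ^ 2 * (12 * E₁k ^ 2 + 8 * E₁k2 - 4 * E₂k2) = 0) := by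
  have hP : E₁k2 - m ^ 2 ≠ 0 := sub_ne_zero.mpr hE
  subst hf₁₂ hf₂₂ hf₃₂
  refine ⟨?_, ?_, ?_⟩ <;> field_simp [hP] <;> ring
end

section
/- Let d, T, μ₁₁, μ₂₁, μ₂₂ be real numbers with d > 0, T > 0 and μ₁₁ ≠ 0. Set ω₁² = −4π²T², E₁ = μ₁₁, E₂ = μ₂₁ + μ₂₂, E₂₂ = μ₂₁·μ₂₂, and define f₁₁ = −2d·ω₁²/E₁, f₂₁ = 2E₁/d, f₁₂ = (d·ω₁²)/(2E₁³)·[(4+8d)E₁² + d·E₂₂ − 4d·E₂·E₁], f₂₂ = −2E₂ + 3E₂₂/(2E₁) + (4d+6)E₁/d. Then f₁₁·f₂₂ − f₂₁·f₁₂ = (16π²T²/μ₁₁²)·[4μ₁₁² + d·(2μ₁₁ − μ₂₁)·(2μ₁₁ − μ₂₂)]. Consequently, the null-energy-condition inequality f₁₁·f₂₂ − f₂₁·f₁₂ ≥ 0 holds if and only if 4μ₁₁² + d·(2μ₁₁ − μ₂₁)·(2μ₁₁ − μ₂₂) ≥ 0. -/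
open Real

/-- the Null Energy Condition combination `f₁₁f₂₂ - f₂₁f₁₂` of the
reconstructed horizon derivatives equals
`(16π²T²/μ₁₁²)·(4μ₁₁² + d(2μ₁₁-μ₂₁)(2μ₁₁-μ₂₂))`; hence the NEC inequality
`f₁₁f₂₂ - f₂₁f₁₂ ≥ 0` holds iff `4μ₁₁² + d(2μ₁₁-μ₂₁)(2μ₁₁-μ₂₂) ≥ 0`. -/
theorem nec_from_pole_skipping
    (d T μ₁₁ μ₂₁ μ₂₂ : ℝ) (hd : 0 < d) (hT : 0 < T) (hμ : μ₁₁ ≠ 0)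
    (ω₁sq E₁ E₂ E₂₂ f₁₁ f₂₁ f₁₂ f₂₂ : ℝ)
    (hω : ω₁sq = -4 * Real.pi ^ 2 * T ^ 2)
    (hE₁ : E₁ = μ₁₁) (hE₂ : E₂ = μ₂₁ + μ₂₂) (hE₂₂ : E₂₂ = μ₂₁ * μ₂₂)
    (hf₁₁ : f₁₁ = -2 * d * ω₁sq / E₁)
    (hf₂₁ : f₂₁ = 2 * E₁ / d)
    (hf₁₂ : f₁₂ = d * ω₁sq / (2 * E₁ ^ 3)
        * ((4 + 8 * d) * E₁ ^ 2 + d * E₂₂ - 4 * d * E₂ * E₁))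
    (hf₂₂ : f₂₂ = -2 * E₂ + 3 * E₂₂ / (2 * E₁) + (4 * d + 6) * E₁ / d) :
    f₁₁ * f₂₂ - f₂₁ * f₁₂
      = 16 * Real.pi ^ 2 * T ^ 2 / μ₁₁ ^ 2
          * (4 * μ₁₁ ^ 2 + d * (2 * μ₁₁ - μ₂₁) * (2 * μ₁₁ - μ₂₂))
    ∧ (f₁₁ * f₂₂ - f₂₁ * f₁₂ ≥ 0
        ↔ 4 * μ₁₁ ^ 2 + d * (2 * μ₁₁ - μ₂₁) * (2 * μ₁₁ - μ₂₂) ≥ 0) := by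
  subst hω hE₁ hE₂ hE₂₂ hf₁₁ hf₂₁ hf₁₂ hf₂₂
  have hd' : d ≠ 0 := hd.ne'
  have key : (-2 * d * (-4 * Real.pi ^ 2 * T ^ 2) / E₁) *
      (-2 * (μ₂₁ + μ₂₂) + 3 * (μ₂₁ * μ₂₂) / (2 * E₁) + (4 * d + 6) * E₁ / d)
      - (2 * E₁ / d) * (d * (-4 * Real.pi ^ 2 * T ^ 2) / (2 * E₁ ^ 3)
        * ((4 + 8 * d) * E₁ ^ 2 + d * (μ₂₁ * μ₂₂) - 4 * d * (μ₂₁ + μ₂₂) * E₁))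
      = 16 * Real.pi ^ 2 * T ^ 2 / E₁ ^ 2
          * (4 * E₁ ^ 2 + d * (2 * E₁ - μ₂₁) * (2 * E₁ - μ₂₂)) := by
    field_simp
    ring
  refine ⟨key, ?_⟩
  rw [key]
  have hpos : 0 < 16 * Real.pi ^ 2 * T ^ 2 / E₁ ^ 2 := by positivity
  constructor
  · intro h
    exact nonneg_of_mul_nonneg_left (mul_comm (16 * Real.pi ^ 2 * T ^ 2 / E₁ ^ 2) _ ▸ h) hpos
  · intro h
    exact mul_nonneg hpos.le h
end

section
/- Let d and T be positive real numbers, set ω₁² = −4π²T², and define the pole-skipping data E₁ = −d(d+1)/2, E₂ = −2d(d+1), E₂₂ = d(d+1)(d²−1). Define the reconstructed horizon derivatives f₁₁ = −2d·ω₁²/E₁, f₂₁ = 2E₁/d, f₁₂ = (d·ω₁²)/(2E₁³)·[(4+8d)E₁² + d·E₂₂ − 4d·E₂·E₁], f₂₂ = −2E₂ + 3E₂₂/(2E₁) + (4d+6)E₁/d. Then the planar (κ = 0) vacuum Einstein expressions all vanish: (i) d(d+1)·f₁₁ + d·f₁₁·f₂₁ = 0; (ii) (d·f₁₂/2)·(1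 + d + f₂₁) + d·f₁₁·(−d·f₂₁ + f₂₂) = 0; (iii) (d(d+1)·f₁₂)/2 − d(d+1)·f₁₁·f₂₁ + d·f₁₂·f₂₁ + d·f₁₁·f₂₁ + (d·f₁₁·f₂₂)/2 = 0. In particular, the reconstructed data satisfy f₂₁ = −(d+1), f₁₂ = d·f₁₁ and f₂₂ = d·f₂₁. -/
/-- for the planar (`κ = 0`) pole-skipping data
`E₁ = -d(d+1)/2`, `E₂ = -2d(d+1)`, `E₂₂ = d(d+1)(d²-1)`, the reconstructed horizon
derivatives satisfy the first- and second-order vacuum Einstein expressions, and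
moreover `f₂₁ = -(d+1)`, `f₁₂ = d·f₁₁`, `f₂₂ = d·f₂₁`. -/
theorem planar_einstein_equations_from_pole_skipping
    (d T : ℝ) (hd : 0 < d) (hT : 0 < T)
    (ω₁sq E₁ E₂ E₂₂ f₁₁ f₂₁ f₁₂ f₂₂ : ℝ)
    (hω : ω₁sq = -4 * Real.pi ^ 2 * T ^ 2)
    (hE₁ : E₁ = -d * (d + 1) / 2)
    (hE₂ : E₂ = -2 * d * (d + 1))
    (hE₂₂ : E₂₂ = d * (d + 1) * (d ^ 2 - 1))
    (hf₁₁ : f₁₁ = -2 * d * ω₁sq / E₁)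
    (hf₂₁ : f₂₁ = 2 * E₁ / d)
    (hf₁₂ : f₁₂ = d * ω₁sq / (2 * E₁ ^ 3)
        * ((4 + 8 * d) * E₁ ^ 2 + d * E₂₂ - 4 * d * E₂ * E₁))
    (hf₂₂ : f₂₂ = -2 * E₂ + 3 * E₂₂ / (2 * E₁) + (4 * d + 6) * E₁ / d) :
    (d * (d + 1) * f₁₁ + d * f₁₁ * f₂₁ = 0)
    ∧ (d * f₁₂ / 2 * (1 + d + f₂₁) + d * f₁₁ * (-d * f₂₁ + f₂₂) = 0)
    ∧ (d * (d + 1) * f₁₂ / 2 - d * (d + 1) * f₁₁ * f₂₁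
        + d * f₁₂ * f₂₁ + d * f₁₁ * f₂₁ + d * f₁₁ * f₂₂ / 2 = 0)
    ∧ f₂₁ = -(d + 1) ∧ f₁₂ = d * f₁₁ ∧ f₂₂ = d * f₂₁ := by
  have hd0 : d ≠ 0 := ne_of_gt hd
  have hd1 : d + 1 ≠ 0 := by positivity
  have hE₁0 : E₁ ≠ 0 := by
    rw [hE₁]
    simp only [ne_eq, div_eq_zero_iff, mul_eq_zero, neg_eq_zero]
    push_neg
    exact ⟨⟨hd0, hd1⟩, by norm_num⟩
  have h21 : f₂₁ = -(d + 1) := by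
    rw [hf₂₁, hE₁]; field_simp
  have h12 : f₁₂ = d * f₁₁ := by
    rw [hf₁₂, hf₁₁, hE₁, hE₂, hE₂₂]
    have h2 : (-d * (d + 1) / 2) ≠ 0 := hE₁ ▸ hE₁0
    field_simp
    ring
  have h22 : f₂₂ = d * f₂₁ := by
    rw [hf₂₂, hf₂₁, hE₁, hE₂, hE₂₂]
    field_simp
    ring
  refine ⟨?_, ?_, ?_, h21, h12, h22⟩ <;> simp only [h12, h22, h21] <;> ring
end

section
/- Let a and T be real numbers (so that 1 + a² ≠ 0). Define the Kerr–Newman–AdS₄ radial pole-skipping data E₁ʳ = −2ia(a²−1)/(1+a²) − 4πT, E₂ʳ = 2·[7 + a² − 8ia(a²−1)/(1+a²) − 16πT], E₃ʳ = 56 + 8a² − 54ia(a²−1)/(1+a²) − 108πT, and the angular pole-skipping data E₁ᵃ = 2a(a³ − a − 2iπT − 2ia²πT)/(1+a²), E₂ᵃ = (2 − 24a² + 6a⁴ − 32iaπT − 32ia³πT)/(1+a²), E₃ᵃ = 2(4 − 43a² + 7a⁴ − 54iaπT − 54ia³πT)/(1+a²). Then both the radial and the angular data satisfy the third-order constraint: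 E₃ʳ − 4·E₂ʳ + 5·E₁ʳ = 0 and E₃ᵃ − 4·E₂ᵃ + 5·E₁ᵃ = 0. -/
open Complex

/-- both the radial and the angular Kerr–Newman–AdS₄ pole-skipping data
satisfy the third-order constraint `E₃ - 4E₂ + 5E₁ = 0`. -/
theorem kn_ads_third_order_constraints (a T : ℝ)
    (E₁r E₂r E₃r E₁a E₂a E₃a : ℂ)
    (hE₁r : E₁r = -2 * Complex.I * (a : ℂ) * ((a : ℂ) ^ 2 - 1) / (1 + (a : ℂ) ^ 2)
        - 4 * (Real.pi : ℂ) * (T : ℂ))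
    (hE₂r : E₂r = 2 * (7 + (a : ℂ) ^ 2
        - 8 * Complex.I * (a : ℂ) * ((a : ℂ) ^ 2 - 1) / (1 + (a : ℂ) ^ 2)
        - 16 * (Real.pi : ℂ) * (T : ℂ)))
    (hE₃r : E₃r = 56 + 8 * (a : ℂ) ^ 2
        - 54 * Complex.I * (a : ℂ) * ((a : ℂ) ^ 2 - 1) / (1 + (a : ℂ) ^ 2)
        - 108 * (Real.pi : ℂ) * (T : ℂ))
    (hE₁a : E₁a = 2 * (a : ℂ) * ((a : ℂ) ^ 3 - (a : ℂ)
        - 2 * Complex.I * (Real.pi : ℂ) * (T : ℂ)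
        - 2 * Complex.I * (a : ℂ) ^ 2 * (Real.pi : ℂ) * (T : ℂ)) / (1 + (a : ℂ) ^ 2))
    (hE₂a : E₂a = (2 - 24 * (a : ℂ) ^ 2 + 6 * (a : ℂ) ^ 4
        - 32 * Complex.I * (a : ℂ) * (Real.pi : ℂ) * (T : ℂ)
        - 32 * Complex.I * (a : ℂ) ^ 3 * (Real.pi : ℂ) * (T : ℂ)) / (1 + (a : ℂ) ^ 2))
    (hE₃a : E₃a = 2 * (4 - 43 * (a : ℂ) ^ 2 + 7 * (a : ℂ) ^ 4
        - 54 * Complex.I * (a : ℂ) * (Real.pi : ℂ) * (T : ℂ)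
        - 54 * Complex.I * (a : ℂ) ^ 3 * (Real.pi : ℂ) * (T : ℂ)) / (1 + (a : ℂ) ^ 2)) :
    E₃r - 4 * E₂r + 5 * E₁r = 0 ∧ E₃a - 4 * E₂a + 5 * E₁a = 0 := by
  have h : (1 + (a : ℂ) ^ 2) ≠ 0 := by
    intro h
    have : ((1 + a ^ 2 : ℝ) : ℂ) = 0 := by push_cast; linear_combination h
    have h2 : (1 + a ^ 2 : ℝ) = 0 := by exact_mod_cast this
    nlinarith [sq_nonneg a]
  subst hE₁r hE₂r hE₃r hE₁a hE₂a hE₃a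
  constructor <;> field_simp <;> ring
end
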